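/- arXiv:2602.10531 — 4 statements merged into one kernel-verified Lean document; each statement's English description precedes it below -/
import Mathlib

section
/- In the iterative multinomial risk recursion with decaying mixture weights, if at each step t ≥ 1 the sample size satisfies n_t > (n_{t-1} - 1)/(α_t(2 - α_t)) + 1, then R_t < R_{t-1}; consequently, if this holds for all t, the sequence (R_t) is strictly decreasing and converges to a limit strictly below R_0. -/
open Filter Topology

/-!
Clearing the denominator `n_t`, the step `R_t < R_{t-1}` is equivalent to
`n₀R₀ < (1 + (n_t - 1)α_t(2 - α_t)) R_{t-1}`, since `1 - (1 - α)² = α(2 - α)`. The a priori bound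
`n₀R₀ ≤ n_{t-1}R_{t-1}` reduces this to `n_{t-1} - 1 < (n_t - 1)α_t(2 - α_t)`, which is the
sample-size condition. A strictly decreasing sequence bounded below by `0` converges to its
infimum, which lies below `R_1 < R_0`.
-/

theorem StrictAnti.exists_tendsto_lt_apply_zero {β : Type*} [ConditionallyCompleteLinearOrder β]
    [TopologicalSpace β] [OrderTopology β] {u : ℕ → β} (hu : StrictAnti u)
    (hbdd : BddBelow (Set.range u)) : ∃ L, Tendsto u atTop (𝓝 L) ∧ L < u 0 :=
  ⟨⨅ t, u t, tendsto_atTop_ciInf hu.antitone hbdd, (ciInf_le hbdd 1).trans_lt (hu zero_lt_one)⟩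

lemma Nat.cast_sub_one_div_self_nonneg (m : ℕ) : 0 ≤ ((m : ℝ) - 1) / m := by
  rcases Nat.eq_zero_or_pos m with rfl | hm
  · simp
  · exact div_nonneg (sub_nonneg.2 (Nat.one_le_cast.2 hm)) (Nat.cast_nonneg m)

/-- One step of the recursion in the paper's notation: `c = n₀R₀`, `k = n_{t-1}`, `m = n_t`, `a = α_t`, `r = R_{t-1}`. -/
lemma risk_step_lt {c k m a r : ℝ} (hm : 0 < m) (hr : 0 < r) (hc : c ≤ r * k)
    (hk : k - 1 < (m - 1) * (a * (2 - a))) :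
    c / m + (m - 1) / m * (1 - a) ^ 2 * r < r := by
  have hgain : k * r < (1 + (m - 1) * (a * (2 - a))) * r := by gcongr; linarith
  rw [div_mul_eq_mul_div, div_mul_eq_mul_div, ← add_div, div_lt_iff₀ hm]
  linear_combination hc + hgain

lemma mul_div_le_of_risk_rec (n : ℕ → ℕ) (α : ℕ → ℝ) (R : ℕ → ℝ) (hR0 : 0 ≤ R 0)
    (hrec : ∀ t, R (t + 1) =
      (n 0 : ℝ) * R 0 / n (t + 1) + ((n (t + 1) : ℝ) - 1) / n (t + 1) * (1 - α (t + 1)) ^ 2 * R t)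
    (t : ℕ) : (n 0 : ℝ) * R 0 / n t ≤ R t := by
  induction t with
  | zero =>
    rcases eq_or_ne (n 0 : ℝ) 0 with h | h
    · simpa [h] using hR0
    · rw [mul_div_cancel_left₀ _ h]
  | succ t ih =>
    have hRt : 0 ≤ R t := (by positivity : 0 ≤ (n 0 : ℝ) * R 0 / n t).trans ih
    rw [hrec t, le_add_iff_nonneg_right]
    have := Nat.cast_sub_one_div_self_nonneg (n (t + 1))
    positivity

/-- For the multinomial risk recursion
`R_t = n₀R₀/n_t + ((n_t-1)/n_t)(1-α_t)² R_{t-1}` with decaying mixture weights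
`α_t ∈ (0,1)`, if at each step `n_t > (n_{t-1}-1)/(α_t(2-α_t)) + 1`, then each step
strictly improves, `R_t < R_{t-1}`; consequently `(R_t)` is strictly decreasing and
converges to a limit strictly below `R_0`. -/
theorem stmt_5 (n : ℕ → ℕ) (hn : ∀ t, 1 ≤ n t)
    (α : ℕ → ℝ) (hα : ∀ t, α t ∈ Set.Ioo (0 : ℝ) 1)
    (R : ℕ → ℝ) (hR0 : 0 < R 0)
    (hrec : ∀ t, R (t + 1) =
      (n 0 : ℝ) * R 0 / n (t + 1)
        + ((n (t + 1) : ℝ) - 1) / n (t + 1) * (1 - α (t + 1)) ^ 2 * R t)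
    (hsize : ∀ t, ((n t : ℝ) - 1) / (α (t + 1) * (2 - α (t + 1))) + 1 < (n (t + 1) : ℝ)) :
    (∀ t, R (t + 1) < R t) ∧ StrictAnti R ∧
      ∃ L, Tendsto R atTop (nhds L) ∧ L < R 0 := by
  have hn_pos (t : ℕ) : (0 : ℝ) < n t := by exact_mod_cast hn t
  have hlow := mul_div_le_of_risk_rec n α R hR0.le hrec
  have hpos (t : ℕ) : 0 < R t := (div_pos (mul_pos (hn_pos 0) hR0) (hn_pos t)).trans_le (hlow t)
  have hstep (t : ℕ) : R (t + 1) < R t := by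
    obtain ⟨ha0, ha1⟩ := hα (t + 1)
    have hgain : 0 < α (t + 1) * (2 - α (t + 1)) := mul_pos ha0 (by linarith)
    rw [hrec t]
    refine risk_step_lt (hn_pos _) (hpos t) ((div_le_iff₀ (hn_pos t)).1 (hlow t)) ?_
    rw [← div_lt_iff₀ hgain]
    linarith [hsize t]
  have hanti : StrictAnti R := strictAnti_nat_of_succ_lt hstep
  exact ⟨hstep, hanti, hanti.exists_tendsto_lt_apply_zero ⟨0, by rintro _ ⟨t, rfl⟩; exact (hpos t).le⟩⟩
end

section
/- Consider the risk recursion R_t = a_t R_0 + b_t R_{t-1} with a_t = n_0/n_t and b_t = ((n_t - 1)/n_t)(1 - α_t)^2. If Σ_t α_t = ∞ and Σ_t 1/n_t < ∞, then R_t → 0 as t → ∞. -/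
open Filter

/-- For the risk recursion `R_t = (n₀/n_t) R_0 + ((n_t-1)/n_t)(1-α_t)² R_{t-1}`
with `α_t ∈ (0,1)`: if `Σ_t α_t = ∞` and `Σ_t 1/n_t < ∞`, then `R_t → 0`. -/
theorem stmt_6 (n : ℕ → ℕ) (hn : ∀ t, 1 ≤ n t)
    (α : ℕ → ℝ) (hα : ∀ t, α t ∈ Set.Ioo (0 : ℝ) 1)
    (R : ℕ → ℝ) (hR0 : 0 < R 0)
    (hrec : ∀ t, R (t + 1) =
      (n 0 : ℝ) / n (t + 1) * R 0
        + ((n (t + 1) : ℝ) - 1) / n (t + 1) * (1 - α (t + 1)) ^ 2 * R t)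
    (hαdiv : Tendsto (fun T => ∑ t ∈ Finset.range T, α t) atTop atTop)
    (hnsum : Summable fun t => 1 / (n t : ℝ)) :
    Tendsto R atTop (nhds 0) := by
  set c : ℕ → ℝ := fun t => (n 0 : ℝ) / n t * R 0 with hcdef
  have hnpos : ∀ t, (0:ℝ) < n t := fun t => by exact_mod_cast hn t
  have hc0 : ∀ t, 0 ≤ c t := fun t =>
    mul_nonneg (div_nonneg (Nat.cast_nonneg _) (hnpos t).le) hR0.le
  have hcs : Summable c := by
    have h1 : Summable fun t => (n 0 : ℝ) * (1 / n t) * R 0 :=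
      (hnsum.mul_left (n 0 : ℝ)).mul_right _
    refine h1.congr fun t => ?_
    show (n 0:ℝ) * (1 / n t) * R 0 = (n 0:ℝ) / n t * R 0
    ring
  have hRnn : ∀ t, 0 ≤ R t := by
    intro t; induction t with
    | zero => exact hR0.le
    | succ t ih =>
      rw [hrec t]
      have h1 : (0:ℝ) ≤ ((n (t + 1) : ℝ) - 1) := by
        have := hn (t+1); have : (1:ℝ) ≤ n (t+1) := by exact_mod_cast this
        linarith
      have h2 : (0:ℝ) < n (t+1) := hnpos _
      positivity
  have hstep : ∀ t, R (t+1) ≤ c (t+1) + (1 - α (t+1)) * R t := by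
    intro t
    rw [hrec t]
    have hα1 := (hα (t+1)).1
    have hα2 := (hα (t+1)).2
    have hd : ((n (t + 1) : ℝ) - 1) / n (t + 1) ≤ 1 := by
      rw [div_le_one (hnpos _)]; linarith
    have hdnn : (0:ℝ) ≤ ((n (t + 1) : ℝ) - 1) / n (t + 1) := by
      apply div_nonneg _ (hnpos _).le
      have : (1:ℝ) ≤ n (t+1) := by exact_mod_cast hn (t+1)
      linarith
    have hsq : (1 - α (t+1))^2 ≤ 1 - α (t+1) := by nlinarith
    have hmain : ((n (t + 1) : ℝ) - 1) / n (t + 1) * (1 - α (t + 1)) ^ 2 ≤ 1 - α (t+1) :=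
      calc ((n (t + 1) : ℝ) - 1) / n (t + 1) * (1 - α (t + 1)) ^ 2
          ≤ 1 * (1 - α (t + 1)) ^ 2 := by
            exact mul_le_mul_of_nonneg_right hd (sq_nonneg _)
        _ = (1 - α (t + 1)) ^ 2 := one_mul _
        _ ≤ 1 - α (t+1) := hsq
    have := mul_le_mul_of_nonneg_right hmain (hRnn t)
    simp only [hcdef]
    linarith
  -- key induction
  have key : ∀ m k, R (m + k) ≤
      (∏ s ∈ Finset.range k, (1 - α (m + s + 1))) * R m
        + ∑ s ∈ Finset.range k, c (m + s + 1) := by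
    intro m k; induction k with
    | zero => simp
    | succ k ih =>
      have hαk1 := (hα (m + k + 1)).1
      have hαk2 := (hα (m + k + 1)).2
      have hPnn : 0 ≤ ∏ s ∈ Finset.range k, (1 - α (m + s + 1)) :=
        Finset.prod_nonneg fun i _ => by have := (hα (m + i + 1)).2; linarith
      have hSnn : 0 ≤ ∑ s ∈ Finset.range k, c (m + s + 1) :=
        Finset.sum_nonneg fun i _ => hc0 _
      have hs := hstep (m + k)
      have heq : m + (k + 1) = (m + k) + 1 := by omega
      rw [heq, Finset.prod_range_succ, Finset.sum_range_succ]
      calc R ((m + k) + 1) ≤ c (m + k + 1) + (1 - α (m + k + 1)) * R (m + k) := hs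
        _ ≤ c (m + k + 1) + (1 - α (m + k + 1)) *
            ((∏ s ∈ Finset.range k, (1 - α (m + s + 1))) * R m
              + ∑ s ∈ Finset.range k, c (m + s + 1)) := by
            have := mul_le_mul_of_nonneg_left ih (by linarith : (0:ℝ) ≤ 1 - α (m + k + 1))
            linarith
        _ ≤ (∏ s ∈ Finset.range k, (1 - α (m + s + 1))) * (1 - α (m + k + 1)) * R m
              + (∑ s ∈ Finset.range k, c (m + s + 1) + c (m + k + 1)) := by
            nlinarith [hSnn, hαk1]
  rw [Metric.tendsto_atTop]
  intro ε hε
  -- choose m with small tail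
  have htail := tendsto_sum_nat_add c
  have htail2 := htail.eventually_lt_const (half_pos hε)
  obtain ⟨M, hM⟩ := eventually_atTop.1 htail2
  set m := M with hmdef
  have hmtail : ∑' j, c (j + (m + 1)) < ε / 2 := hM (m + 1) (by omega)
  -- shifted sums of α diverge
  have hS : Tendsto (fun k => ∑ s ∈ Finset.range k, α (m + s + 1)) atTop atTop := by
    have h1 : ∀ k, ∑ s ∈ Finset.range k, α (m + s + 1)
        = (∑ t ∈ Finset.range ((m+1) + k), α t) - ∑ t ∈ Finset.range (m+1), α t := by
      intro k
      rw [Finset.sum_range_add]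
      have : ∀ i ∈ Finset.range k, α ((m+1) + i) = α (m + i + 1) := by
        intro i _; congr 1; omega
      rw [Finset.sum_congr rfl this]; ring
    have h2 : Tendsto (fun k => ∑ t ∈ Finset.range ((m+1) + k), α t) atTop atTop := by
      refine hαdiv.comp (tendsto_atTop_mono (fun k => ?_) tendsto_id)
      simp only [id]; omega
    have h3 := tendsto_atTop_add_const_right atTop (-(∑ t ∈ Finset.range (m+1), α t)) h2
    refine h3.congr fun k => ?_
    rw [h1 k]; ring
  -- product tends to 0
  have hP : Tendsto (fun k => (∏ s ∈ Finset.range k, (1 - α (m + s + 1))) * R m)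
      atTop (nhds 0) := by
    have hub : Tendsto (fun k => Real.exp (-(∑ s ∈ Finset.range k, α (m + s + 1))) * R m)
        atTop (nhds 0) := by
      have := (Real.tendsto_exp_neg_atTop_nhds_zero.comp hS).mul_const (R m)
      simpa using this
    refine squeeze_zero (fun k => ?_) (fun k => ?_) hub
    · exact mul_nonneg (Finset.prod_nonneg fun i _ => by have := (hα (m + i + 1)).2; linarith)
        (hRnn m)
    · apply mul_le_mul_of_nonneg_right _ (hRnn m)
      calc ∏ s ∈ Finset.range k, (1 - α (m + s + 1))
          ≤ ∏ s ∈ Finset.range k, Real.exp (-(α (m + s + 1))) := by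
            apply Finset.prod_le_prod
            · intro i _; have := (hα (m + i + 1)).2; linarith
            · intro i _
              have := Real.add_one_le_exp (-(α (m + i + 1)))
              linarith
        _ = Real.exp (∑ s ∈ Finset.range k, -(α (m + s + 1))) := by
            rw [Real.exp_sum]
        _ = Real.exp (-(∑ s ∈ Finset.range k, α (m + s + 1))) := by
            rw [Finset.sum_neg_distrib]
  obtain ⟨K, hK⟩ := eventually_atTop.1 (hP.eventually_lt_const (half_pos hε))
  refine ⟨m + K, fun T hT => ?_⟩
  rw [Real.dist_eq, sub_zero, abs_of_nonneg (hRnn T)]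
  set k := T - m with hkdef
  have hTk : T = m + k := by omega
  have hkK : K ≤ k := by omega
  have hsumtail : ∑ s ∈ Finset.range k, c (m + s + 1) ≤ ∑' j, c (j + (m + 1)) := by
    have hshift : Summable fun j => c (j + (m + 1)) := (summable_nat_add_iff (m+1)).2 hcs
    have : ∑ s ∈ Finset.range k, c (m + s + 1) = ∑ s ∈ Finset.range k, c (s + (m + 1)) := by
      apply Finset.sum_congr rfl; intro i _; congr 1; omega
    rw [this]
    exact Summable.sum_le_tsum _ (fun i _ => hc0 _) hshift
  calc R T = R (m + k) := by rw [hTk]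
    _ ≤ (∏ s ∈ Finset.range k, (1 - α (m + s + 1))) * R m
          + ∑ s ∈ Finset.range k, c (m + s + 1) := key m k
    _ < ε / 2 + ε / 2 := by
        have := hK k hkK
        have := lt_of_le_of_lt hsumtail hmtail
        linarith
    _ = ε := by ring
end

section
/- If Σ_{t} α_t = ∞ and C := Σ_{t} 1/n_t < ∞, then s̄_t := Σ_{m=1}^{t} (1/n_m) exp(-2 Σ_{j=m+1}^{t} α_j) converges to 0 as t → ∞. -/
open Filter Topology

/-- If `Σ_t α_t = ∞` (with `α_t ∈ (0,1)`) and `Σ_t 1/n_t < ∞` (with `n_t > 0`),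
then `s̄_t = Σ_{m=1}^{t} (1/n_m) exp(-2 Σ_{j=m+1}^{t} α_j)` converges to 0. -/
theorem stmt_8 (n : ℕ → ℝ) (hn : ∀ t, 0 < n t)
    (α : ℕ → ℝ) (hα : ∀ t, α t ∈ Set.Ioo (0 : ℝ) 1)
    (hαdiv : Tendsto (fun T => ∑ t ∈ Finset.range T, α t) atTop atTop)
    (hnsum : Summable fun t => 1 / n t) :
    Tendsto
      (fun t => ∑ m ∈ Finset.Icc 1 t,
        (1 / n m) * Real.exp (-2 * ∑ j ∈ Finset.Icc (m + 1) t, α j))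
      atTop (nhds 0) := by
  set f : ℕ → ℕ → ℝ := fun t m =>
    if m ∈ Finset.Icc 1 t then (1 / n m) * Real.exp (-2 * ∑ j ∈ Finset.Icc (m + 1) t, α j)
    else 0 with hf
  have key : Tendsto (fun t => ∑' m, f t m) atTop (𝓝 (∑' _ : ℕ, (0:ℝ))) := by
    apply tendsto_tsum_of_dominated_convergence (bound := fun m => 1 / n m) hnsum
    · intro m
      rcases Nat.eq_zero_or_pos m with rfl | hm
      · simp [hf]
      · have hev : (fun t => (1 / n m) *
            Real.exp (-2 * ((∑ j ∈ Finset.range (t+1), α j) - ∑ j ∈ Finset.range (m+1), α j)))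
            =ᶠ[atTop] (f · m) := by
          filter_upwards [eventually_ge_atTop m] with t ht
          have hmem : m ∈ Finset.Icc 1 t := Finset.mem_Icc.2 ⟨hm, ht⟩
          have : Finset.Icc (m+1) t = Finset.Ico (m+1) (t+1) := by
            rw [Finset.Ico_add_one_right_eq_Icc]
          rw [hf]
          simp only [hmem, if_pos, this,
            Finset.sum_Ico_eq_sub _ (Nat.succ_le_succ ht)]
        refine Tendsto.congr' hev ?_
        have h1 : Tendsto (fun t : ℕ => -2 * ((∑ j ∈ Finset.range (t+1), α j)
            - ∑ j ∈ Finset.range (m+1), α j)) atTop atBot := by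
          have h2 : Tendsto (fun t : ℕ => (∑ j ∈ Finset.range (t+1), α j)
              - ∑ j ∈ Finset.range (m+1), α j) atTop atTop :=
            (hαdiv.comp (tendsto_add_atTop_nat 1)).atTop_add tendsto_const_nhds
          simpa using h2.const_mul_atTop_of_neg (by norm_num : (-2:ℝ) < 0)
        have := (Real.tendsto_exp_atBot.comp h1).const_mul (1 / n m)
        simpa using this
    · filter_upwards with t m
      rw [hf]
      by_cases hmem : m ∈ Finset.Icc 1 t
      · simp only [hmem, if_pos]
        have hs : 0 ≤ ∑ j ∈ Finset.Icc (m+1) t, α j :=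
          Finset.sum_nonneg fun j _ => (hα j).1.le
        have he : Real.exp (-2 * ∑ j ∈ Finset.Icc (m+1) t, α j) ≤ 1 := by
          rw [Real.exp_le_one_iff]; nlinarith
        have hnm : 0 < 1 / n m := one_div_pos.2 (hn m)
        rw [Real.norm_eq_abs, abs_of_nonneg (by positivity)]
        nlinarith [Real.exp_pos (-2 * ∑ j ∈ Finset.Icc (m+1) t, α j)]
      · simp only [hmem, if_neg, not_false_iff, norm_zero]
        exact (one_div_pos.2 (hn m)).le
  have heq : (fun t => ∑' m, f t m) = fun t => ∑ m ∈ Finset.Icc 1 t,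
      (1 / n m) * Real.exp (-2 * ∑ j ∈ Finset.Icc (m + 1) t, α j) := by
    funext t
    rw [tsum_eq_sum (s := Finset.Icc 1 t) (fun m hm => by rw [hf]; exact if_neg hm)]
    exact Finset.sum_congr rfl fun m hm => by rw [hf]; exact if_pos hm
  rw [heq] at key
  simpa using key
end

section
/- Let (R_t) be a real sequence satisfying R_{t+1} = a_t R_t + b_t with a_t ∈ (0,1), a_t → 1, and b_t ≥ 0 with b_t = O(1/t²). Then (R_t) is Cauchy and hence converges. -/
open Filter

/-- If a real sequence satisfies `R_{t+1} = a_t R_t + b_t` with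
`a_t ∈ (0,1)`, `a_t → 1`, `b_t ≥ 0` and `b_t = O(1/t²)` (i.e. `b_t ≤ C/t²` for large `t`),
then `(R_t)` is Cauchy and hence converges. -/
theorem stmt_13 (a b R : ℕ → ℝ) (hR0 : 0 ≤ R 0)
    (ha : ∀ t, a t ∈ Set.Ioo (0 : ℝ) 1) (halim : Tendsto a atTop (nhds 1))
    (hb : ∀ t, 0 ≤ b t) (hbO : ∃ C : ℝ, ∀ᶠ t in atTop, b t ≤ C / (t : ℝ) ^ 2)
    (hrec : ∀ t, R (t + 1) = a t * R t + b t) :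
    CauchySeq R ∧ ∃ L, Tendsto R atTop (nhds L) := by
  -- R is nonnegative
  have hRn : ∀ t, 0 ≤ R t := by
    intro t
    induction t with
    | zero => exact hR0
    | succ n ih =>
      rw [hrec n]
      exact add_nonneg (mul_nonneg (ha n).1.le ih) (hb n)
  -- b is summable
  obtain ⟨C, hC⟩ := hbO
  obtain ⟨N, hN⟩ := eventually_atTop.1 hC
  have hsum : Summable b := by
    rw [← summable_nat_add_iff (N + 1)]
    have h1 : Summable (fun n : ℕ => C / ((n : ℝ) + (N + 1)) ^ 2) := by
      have := (summable_nat_add_iff (f := fun n : ℕ => C / (n : ℝ) ^ 2) (N + 1)).2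
      have hs : Summable (fun n : ℕ => C / (n : ℝ) ^ 2) := by
        simpa [div_eq_mul_inv, mul_comm] using
          (Real.summable_one_div_nat_pow.2 (by norm_num : 1 < 2)).mul_left C
      simpa [add_comm] using (summable_nat_add_iff (N + 1)).2 hs
    refine Summable.of_nonneg_of_le (fun n => hb _) (fun n => ?_) h1
    have hle := hN (n + (N + 1)) (by omega)
    calc b (n + (N + 1)) ≤ C / ((n + (N + 1) : ℕ) : ℝ) ^ 2 := hle
      _ = C / ((n : ℝ) + (N + 1)) ^ 2 := by push_cast; ring_nf
  -- tail sums
  set T : ℕ → ℝ := fun t => ∑' k, b (k + t) with hT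
  have hTnn : ∀ t, 0 ≤ T t := fun t =>
    tsum_nonneg (fun k => hb _)
  have hTrec : ∀ t, T t = b t + T (t + 1) := by
    intro t
    have hs : Summable (fun k => b (k + t)) := (summable_nat_add_iff t).2 hsum
    have := Summable.tsum_eq_zero_add hs
    simpa [hT, add_assoc, add_comm, add_left_comm] using this
  have hT0 : Tendsto T atTop (nhds 0) := tendsto_sum_nat_add b
  -- S is antitone, bounded below
  set S : ℕ → ℝ := fun t => R t + T t with hS
  have hSanti : Antitone S := by
    apply antitone_nat_of_succ_le
    intro n
    have h1 : R (n + 1) ≤ R n + b n := by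
      rw [hrec n]
      nlinarith [(ha n).1, (ha n).2, hRn n, hb n]
    have h2 := hTrec n
    simp only [hS]
    linarith
  have hSbdd : BddBelow (Set.range S) := by
    refine ⟨0, ?_⟩
    rintro x ⟨t, rfl⟩
    exact add_nonneg (hRn t) (hTnn t)
  have hSconv : Tendsto S atTop (nhds (⨅ t, S t)) :=
    tendsto_atTop_ciInf hSanti hSbdd
  have hRconv : Tendsto R atTop (nhds ((⨅ t, S t) - 0)) := by
    have : R = fun t => S t - T t := by
      funext t; simp [hS]
    rw [this]
    exact hSconv.sub hT0
  exact ⟨hRconv.cauchySeq, ⟨_, hRconv⟩⟩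
end
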